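/- arXiv:2303.00155 — 6 statements merged into one kernel-verified Lean document; each statement's English description precedes it below -/
import Mathlib

section
/- Let α : ℝ → ℝ be a measurable function bounded above by α* > 0, and consider the scalar system V' = -α(t)V with state transition Φ(t,s) = exp(-∫_s^t α(τ)dτ). If there exist a, T > 0 such that ∫_t^{t+T} α(s)ds ≥ a for all t ≥ 0, then there exist γ₃, γ₄ > 0 such that Φ(t,s) ≤ γ₃ exp(-γ₄(t-s)) for all t ≥ s ≥ 0. -/
open MeasureTheory intervalIntegral Real

theorem stmt_0 (α : ℝ → ℝ) (αstar : ℝ) (hαstar : 0 < αstar)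
    (hmeas : Measurable α) (hbdd : ∀ t : ℝ, 0 ≤ t → α t ≤ αstar)
    (a T : ℝ) (ha : 0 < a) (hT : 0 < T)
    (hint : ∀ t : ℝ, 0 ≤ t → a ≤ ∫ s in t..(t + T), α s) :
    ∃ γ₃ γ₄ : ℝ, 0 < γ₃ ∧ 0 < γ₄ ∧
      ∀ t s : ℝ, 0 ≤ s → s ≤ t →
        Real.exp (-∫ τ in s..t, α τ) ≤ γ₃ * Real.exp (-γ₄ * (t - s)) := by
  -- α is interval integrable on each [t, t+T], t ≥ 0
  have hII : ∀ t : ℝ, 0 ≤ t → IntervalIntegrable α volume t (t + T) := by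
    intro t ht
    by_contra h
    have := hint t ht
    rw [intervalIntegral.integral_undef h] at this
    linarith
  -- integrability and lower bound on [s, s + n T]
  have hstep : ∀ s : ℝ, 0 ≤ s → ∀ n : ℕ,
      IntervalIntegrable α volume s (s + n * T) ∧
      (n : ℝ) * a ≤ ∫ τ in s..(s + n * T), α τ := by
    intro s hs n
    induction n with
    | zero =>
        simp
    | succ n ih =>
        have h1 : IntervalIntegrable α volume (s + n * T) (s + n * T + T) := by
          have : (0:ℝ) ≤ s + n * T := by positivity
          exact hII _ this
        have hII' : IntervalIntegrable α volume s (s + (n + 1 : ℕ) * T) := by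
          have := ih.1.trans h1
          have heq : s + (n + 1 : ℕ) * T = s + n * T + T := by push_cast; ring
          rwa [heq]
        refine ⟨hII', ?_⟩
        have hadd : (∫ τ in s..(s + n * T), α τ) + ∫ τ in (s + n * T)..(s + n * T + T), α τ
            = ∫ τ in s..(s + n * T + T), α τ :=
          intervalIntegral.integral_add_adjacent_intervals ih.1 h1
        have h2 : a ≤ ∫ τ in (s + n * T)..(s + n * T + T), α τ := by
          have : (0:ℝ) ≤ s + n * T := by positivity
          exact hint _ this
        have heq : s + (n + 1 : ℕ) * T = s + n * T + T := by push_cast; ring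
        rw [heq]
        push_cast
        nlinarith [ih.2]
  refine ⟨Real.exp (αstar * T), a / T, Real.exp_pos _, by positivity, ?_⟩
  intro t s hs hst
  set N : ℕ := ⌈(t - s) / T⌉₊ with hN
  have hts : 0 ≤ (t - s) / T := div_nonneg (by linarith) hT.le
  have hle : (t - s) / T ≤ (N : ℝ) := Nat.le_ceil _
  have hlt : (N : ℝ) < (t - s) / T + 1 := Nat.ceil_lt_add_one hts
  have htle : t ≤ s + N * T := by
    have := (div_le_iff₀ hT).mp hle
    linarith
  have hNT : s + N * T ≤ t + T := by
    have hdiv : (t - s) / T * T = t - s := div_mul_cancel₀ _ hT.ne'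
    nlinarith
  obtain ⟨hII2, hlow⟩ := hstep s hs N
  have ht0 : (0:ℝ) ≤ t := le_trans hs hst
  -- integrability on subintervals
  have hsub1 : IntervalIntegrable α volume s t := by
    apply hII2.mono_set
    rw [Set.uIcc_of_le hst, Set.uIcc_of_le (le_trans hst htle)]
    exact Set.Icc_subset_Icc le_rfl htle
  have hsub2 : IntervalIntegrable α volume t (s + N * T) := by
    apply hII2.mono_set
    rw [Set.uIcc_of_le htle, Set.uIcc_of_le (le_trans hst htle)]
    exact Set.Icc_subset_Icc hst le_rfl
  have hadd : (∫ τ in s..t, α τ) + ∫ τ in t..(s + N * T), α τ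
      = ∫ τ in s..(s + N * T), α τ :=
    intervalIntegral.integral_add_adjacent_intervals hsub1 hsub2
  -- upper bound on the tail
  have htail : (∫ τ in t..(s + N * T), α τ) ≤ αstar * (s + N * T - t) := by
    have hmono : (∫ τ in t..(s + N * T), α τ) ≤ ∫ _ in t..(s + N * T), αstar := by
      apply intervalIntegral.integral_mono_on htle hsub2 (intervalIntegrable_const)
      intro x hx
      exact hbdd x (le_trans ht0 hx.1)
    rw [intervalIntegral.integral_const, smul_eq_mul] at hmono
    linarith [hmono]
  have htail2 : αstar * (s + N * T - t) ≤ αstar * T := by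
    nlinarith
  -- lower bound on ∫ s..t
  have hmain : (a / T) * (t - s) - αstar * T ≤ ∫ τ in s..t, α τ := by
    have h1 : (t - s) / T * a ≤ (N : ℝ) * a := by nlinarith
    have : (a / T) * (t - s) = (t - s) / T * a := by ring
    nlinarith
  calc Real.exp (-∫ τ in s..t, α τ)
      ≤ Real.exp (αstar * T - (a / T) * (t - s)) := by
        apply Real.exp_le_exp.mpr; linarith
    _ = Real.exp (αstar * T) * Real.exp (-(a / T) * (t - s)) := by
        rw [← Real.exp_add]; ring_nf
end

section
/- Let w : [0,∞) → ℝ be bounded and piecewise constant on a sequence of nonempty contiguous intervals [s₀,s₁), [s₁,s₂), ... covering [0,∞), with dwell time δ₀ := inf_{k≥1}(s_k − s_{k−1}) > 0. Then for any T > 0 the family Σ₁ = { s ↦ w(r+s), s ∈ [0,T] : r ≥ 0 } is precompact in L¹(0,T; ℝ). -/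
/-!
Because consecutive switching times are at least `δ₀` apart, a window `[r, r + T]` contains at
most `N` of them as soon as `T ≤ N δ₀`. Hence every shift `t ↦ w (r + t)` agrees on `[0, T]` with
a step function `c + ∑_{i < N} cᵢ 1_{[tᵢ, ∞)}` with `|c| ≤ w*`, `|cᵢ| ≤ 2 w*` and
`tᵢ ∈ [0, T + 1]`. In `L¹` of an atomless finite measure, `t ↦ 1_{[t, ∞)}` is continuous, so
these step functions form the continuous image of a compact parameter set.
-/

open MeasureTheory Set Filter Topology
open scoped symmDiff ENNReal

theorem Finset.sum_range_ite_lt_sub {G : Type*} [AddCommGroup G] (v : ℕ → G) {j N : ℕ}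
    (hj : j ≤ N) :
    ∑ i ∈ Finset.range N, (if i < j then v (i + 1) - v i else 0) = v j - v 0 := by
  have hfilter : (Finset.range N).filter (· < j) = Finset.range j := by
    ext i
    simp only [Finset.mem_filter, Finset.mem_range]
    omega
  rw [← Finset.sum_filter, hfilter, Finset.sum_range_sub]

section

variable {α : Type*} [LinearOrder α] {s : ℕ → α}

theorem exists_lt_mem_Ico_of_le_of_lt {y : α} (h0 : s 0 ≤ y) :
    ∀ {n : ℕ}, y < s n → ∃ k < n, y ∈ Ico (s k) (s (k + 1))
  | 0, h => absurd h0 (not_le.mpr h)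
  | n + 1, h => by
    by_cases hn : y < s n
    · obtain ⟨k, hk, hy⟩ := exists_lt_mem_Ico_of_le_of_lt h0 hn
      exact ⟨k, by omega, hy⟩
    · exact ⟨n, n.lt_succ_self, not_lt.mp hn, h⟩

theorem StrictMono.sum_range_ite_le_sub {G : Type*} [AddCommGroup G] (hs : StrictMono s)
    (v : ℕ → G) {y : α} {j N : ℕ} (hy : y ∈ Ico (s j) (s (j + 1))) (hj : j ≤ N) :
    ∑ i ∈ Finset.range N, (if s (i + 1) ≤ y then v (i + 1) - v i else 0) = v j - v 0 := by
  have hiff : ∀ i, s (i + 1) ≤ y ↔ i < j := fun i =>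
    ⟨fun h => Nat.succ_lt_succ_iff.mp (hs.lt_iff_lt.mp (h.trans_lt hy.2)),
      fun h => (hs.monotone h).trans hy.1⟩
  simp only [hiff]
  exact Finset.sum_range_ite_lt_sub v hj

end

theorem Ici_symmDiff_Ici_subset_Icc (x y : ℝ) :
    Ici y ∆ Ici x ⊆ Icc (x - dist y x) (x + dist y x) := by
  intro z hz
  rw [Real.dist_eq]
  rcases Set.mem_symmDiff.mp hz with ⟨hy, hx⟩ | ⟨hx, hy⟩ <;>
    simp only [mem_Ici, not_le] at hx hy <;>
    constructor <;> cases abs_cases (y - x) <;> linarith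

namespace MeasureTheory

section StepFunctions

variable {p : ℝ≥0∞} {μ : Measure ℝ} [IsFiniteMeasure μ]

variable (p μ) in
noncomputable def indicatorIciLp (t : ℝ) : Lp ℝ p μ :=
  indicatorConstLp p (measurableSet_Ici (a := t)) (measure_ne_top μ _) 1

theorem continuous_indicatorIciLp [Fact (1 ≤ p)] [NullSingletonClass μ] (hp : p ≠ ∞) :
    Continuous (indicatorIciLp p μ) := by
  refine continuous_indicatorConstLp_set hp fun x => ?_
  have hdist : Tendsto (fun y => dist y x) (𝓝 x) (𝓝 0) :=
    (continuous_id.dist continuous_const).tendsto' x 0 (dist_self x)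
  exact tendsto_of_tendsto_of_tendsto_of_le_of_le tendsto_const_nhds
    ((tendsto_measure_Icc μ x).comp hdist) (fun _ => zero_le)
    fun y => measure_mono (Ici_symmDiff_Ici_subset_Icc x y)

variable (p μ) in
noncomputable def stepFunLp {N : ℕ} (a : ℝ × (Fin N → ℝ × ℝ)) : Lp ℝ p μ :=
  Lp.const p μ a.1 + ∑ i, (a.2 i).2 • indicatorIciLp p μ (a.2 i).1

theorem coeFn_stepFunLp {N : ℕ} (a : ℝ × (Fin N → ℝ × ℝ)) :
    stepFunLp p μ a =ᵐ[μ]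
      fun x => a.1 + ∑ i, (Ici (a.2 i).1).indicator (fun _ => (a.2 i).2) x := by
  have hsteps : ∀ᵐ x ∂μ, ∀ i, ((a.2 i).2 • indicatorIciLp p μ (a.2 i).1) x
      = (Ici (a.2 i).1).indicator (fun _ => (a.2 i).2) x := by
    refine ae_all_iff.mpr fun i => ?_
    filter_upwards [Lp.coeFn_smul (a.2 i).2 (indicatorIciLp p μ (a.2 i).1),
      indicatorConstLp_coeFn (p := p) (μ := μ) (c := (1 : ℝ))] with x h1 h2
    rw [h1, Pi.smul_apply, indicatorIciLp, h2]
    simp [indicator_apply]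
  set steps : Fin N → Lp ℝ p μ := fun i => (a.2 i).2 • indicatorIciLp p μ (a.2 i).1
  filter_upwards [Lp.coeFn_add (Lp.const p μ a.1) (∑ i, steps i), Lp.coeFn_const p μ a.1,
    Lp.coeFn_fun_finsetSum Finset.univ steps, hsteps] with x h1 h2 h3 h4
  rw [stepFunLp, h1, Pi.add_apply, h2, h3, Function.const_apply]
  exact congrArg _ (Finset.sum_congr rfl fun i _ => h4 i)

theorem continuous_stepFunLp [Fact (1 ≤ p)] [NullSingletonClass μ] (hp : p ≠ ∞) (N : ℕ) :
    Continuous (stepFunLp p μ (N := N)) := by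
  have := continuous_indicatorIciLp (μ := μ) hp
  have : Continuous (Lp.const (E := ℝ) p μ) := (Lp.constL p μ ℝ).continuous
  unfold stepFunLp
  fun_prop

end StepFunctions

end MeasureTheory

section

variable {w : ℝ → ℝ} {s : ℕ → ℝ}

theorem eq_add_sum_range_jumps (hs : StrictMono s)
    (hconst : ∀ k : ℕ, ∀ t₁ ∈ Ico (s k) (s (k + 1)), ∀ t₂ ∈ Ico (s k) (s (k + 1)), w t₁ = w t₂)
    {k N : ℕ} {r y : ℝ} (hr : r ∈ Ico (s k) (s (k + 1))) (hry : r ≤ y)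
    (hy : y < s (k + N + 1)) :
    w y = w r + ∑ i ∈ Finset.range N,
      (if s (k + i + 1) ≤ y then w (s (k + i + 1)) - w (s (k + i)) else 0) := by
  set u : ℕ → ℝ := fun n => s (k + n)
  have hu : StrictMono u := hs.comp fun _ _ h => Nat.add_lt_add_left h k
  obtain ⟨j, hj, hyj⟩ := exists_lt_mem_Ico_of_le_of_lt (s := u) (hr.1.trans hry) (n := N + 1) hy
  have hsum := hu.sum_range_ite_le_sub (w ∘ u) hyj (Nat.lt_succ_iff.mp hj)
  have hwy : w y = w (u j) := hconst (k + j) y hyj (u j) ⟨le_rfl, hu (Nat.lt_succ_self j)⟩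
  have hwr : w r = w (u 0) := hconst k r hr (s k) ⟨le_rfl, hs (Nat.lt_succ_self k)⟩
  simp only [u, Function.comp_apply, ← add_assoc] at hsum hwy hwr
  rw [hsum, hwy, hwr]
  abel

theorem add_mul_le_of_forall_le_sub {δ : ℝ} (h : ∀ k, δ ≤ s (k + 1) - s k) (k n : ℕ) :
    s k + n * δ ≤ s (k + n) := by
  induction n with
  | zero => simp
  | succ n ih =>
    rw [← add_assoc]
    push_cast
    linarith [h (k + n)]

end

def stepParams (N : ℕ) (τ M : ℝ) : Set (ℝ × (Fin N → ℝ × ℝ)) :=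
  Icc (-M) M ×ˢ univ.pi fun _ => Icc 0 τ ×ˢ Icc (-(2 * M)) (2 * M)

theorem isCompact_stepParams (N : ℕ) (τ M : ℝ) : IsCompact (stepParams N τ M) :=
  isCompact_Icc.prod (isCompact_univ_pi fun _ => isCompact_Icc.prod isCompact_Icc)

theorem exists_mem_stepParams_of_dwell {w : ℝ → ℝ} {M : ℝ} (hbdd : ∀ t, |w t| ≤ M)
    {s : ℕ → ℝ} (hs0 : s 0 = 0) (hs : StrictMono s) (htop : Tendsto s atTop atTop)
    (hconst : ∀ k : ℕ, ∀ t₁ ∈ Ico (s k) (s (k + 1)), ∀ t₂ ∈ Ico (s k) (s (k + 1)), w t₁ = w t₂)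
    {δ : ℝ} (hdwell : ∀ k, δ ≤ s (k + 1) - s k) {T : ℝ} (hT : 0 ≤ T) {N : ℕ} (hN : T ≤ N * δ)
    {r : ℝ} (hr : 0 ≤ r) :
    ∃ a ∈ stepParams N (T + 1) M, ∀ x ∈ Icc 0 T,
      w (r + x) = a.1 + ∑ i, (Ici (a.2 i).1).indicator (fun _ => (a.2 i).2) x := by
  obtain ⟨n, hn⟩ := (htop.eventually_gt_atTop r).exists
  obtain ⟨k, -, hk⟩ := exists_lt_mem_Ico_of_le_of_lt (hs0 ▸ hr) hn
  -- Jump times beyond the window are clamped to `T + 1`, where `Ici` no longer meets `[0, T]`.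
  refine ⟨(w r, fun i => (min (s (k + i + 1) - r) (T + 1), w (s (k + i + 1)) - w (s (k + i)))),
    ⟨abs_le.mp (hbdd r), fun i _ => ⟨⟨le_min ?_ ?_, min_le_right _ _⟩, abs_le.mp ?_⟩⟩,
    fun x hx => ?_⟩
  · exact sub_nonneg.mpr (hk.2.le.trans (hs.monotone (by omega)))
  · linarith
  · exact (abs_sub _ _).trans (by linarith [hbdd (s (k + i + 1)), hbdd (s (k + i))])
  · have hy : r + x < s (k + N + 1) := calc
      r + x < s (k + 1) + N * δ := by linarith [hk.2, hx.2]
      _ ≤ s (k + N + 1) := (add_mul_le_of_forall_le_sub hdwell (k + 1) N).trans_eq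
        (by rw [add_right_comm])
    rw [eq_add_sum_range_jumps hs hconst hk (by linarith [hx.1]) hy,
      ← Fin.sum_univ_eq_sum_range]
    refine congrArg _ (Finset.sum_congr rfl fun i _ => ?_)
    simp only [indicator_apply, mem_Ici, min_le_iff]
    refine if_congr ⟨fun h => Or.inl (by linarith), ?_⟩ rfl rfl
    rintro (h | h)
    · linarith
    · linarith [hx.2]

theorem stmt_3 (w : ℝ → ℝ) (wstar : ℝ) (hbdd : ∀ t : ℝ, |w t| ≤ wstar)
    (s : ℕ → ℝ) (hs0 : s 0 = 0) (hmono : StrictMono s)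
    (htop : Filter.Tendsto s Filter.atTop Filter.atTop)
    (hconst : ∀ k : ℕ, ∀ t₁ ∈ Set.Ico (s k) (s (k+1)), ∀ t₂ ∈ Set.Ico (s k) (s (k+1)),
      w t₁ = w t₂)
    (δ₀ : ℝ) (hδ₀ : 0 < δ₀) (hdwell : ∀ k : ℕ, δ₀ ≤ s (k+1) - s k)
    (T : ℝ) (hT : 0 < T) :
    IsCompact (closure
      {f : Lp ℝ 1 (volume.restrict (Set.Ioc (0:ℝ) T)) |
        ∃ r : ℝ, 0 ≤ r ∧
          (⇑f) =ᵐ[volume.restrict (Set.Ioc (0:ℝ) T)] fun t => w (r + t)}) := by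
  obtain ⟨N, hN⟩ : ∃ N : ℕ, T ≤ N * δ₀ := by
    obtain ⟨N, hN⟩ := exists_nat_ge (T / δ₀)
    exact ⟨N, (div_le_iff₀ hδ₀).mp hN⟩
  refine ((isCompact_stepParams N (T + 1) wstar).image
    (continuous_stepFunLp ENNReal.one_ne_top N)).closure_of_subset ?_
  rintro f ⟨r, hr, hf⟩
  obtain ⟨a, haK, ha⟩ :=
    exists_mem_stepParams_of_dwell hbdd hs0 hmono htop hconst hdwell hT.le hN hr
  refine ⟨a, haK, Lp.ext ?_⟩
  filter_upwards [coeFn_stepFunLp a, hf, ae_restrict_mem measurableSet_Ioc] with x h1 h2 hx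
  rw [h1, h2, ha x (Ioc_subset_Icc_self hx)]
end

section
/- Let L be the Laplacian matrix of a weighted undirected graph on vertex set V with |V| = N, and let S₁, S₂ be nonempty disjoint subsets of V with S₁ ∪ S₂ = V. Then the second-smallest eigenvalue satisfies λ₂(L) ≤ e(S₁,S₂)/|S₁| + e(S₂,S₁)/|S₂|, where e(S₁,S₂) = Σ_{i∈S₁, j∈S₂} w_{ij}. -/
/-! The cut vector `x`, equal to `|S₂|` on `S₁` and to `-|S₁|` on `S₂`, is orthogonal to the
constant vector `1`, which lies in the kernel of `L`. A nonzero combination `y` of `1` and `x` is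
orthogonal to an eigenvector of `λ₁`, so `λ₂ ‖y‖² ≤ yᵀ L y`, and since `L 1 = 0` this bounds `λ₂` by
the Rayleigh quotient of `x`, which is `e(S₁,S₂)/|S₁| + e(S₂,S₁)/|S₂|`. -/

open Matrix Finset

namespace Matrix.IsHermitian

variable {n : Type*} [Fintype n] [DecidableEq n] {A : Matrix n n ℝ} (hA : A.IsHermitian)

theorem sum_dotProduct_smul_eigenvectorBasis (y : n → ℝ) :
    ∑ k, (hA.eigenvectorBasis k ⬝ᵥ y) • ⇑(hA.eigenvectorBasis k) = y := by
  have h := congrArg WithLp.ofLp (hA.eigenvectorBasis.sum_repr' (WithLp.toLp 2 y))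
  simpa [EuclideanSpace.inner_eq_star_dotProduct, dotProduct_comm] using h

theorem dotProduct_self_eq_sum_sq (y : n → ℝ) :
    y ⬝ᵥ y = ∑ k, (hA.eigenvectorBasis k ⬝ᵥ y) ^ 2 := by
  have h := hA.eigenvectorBasis.sum_sq_inner_right (WithLp.toLp 2 y)
  rw [← real_inner_self_eq_norm_sq] at h
  simp only [EuclideanSpace.inner_eq_star_dotProduct, star_trivial] at h
  simpa [dotProduct_comm] using h.symm

theorem dotProduct_mulVec_eq_sum (y : n → ℝ) :
    y ⬝ᵥ (A *ᵥ y) = ∑ k, hA.eigenvalues k * (hA.eigenvectorBasis k ⬝ᵥ y) ^ 2 := by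
  conv_lhs => arg 2; rw [← hA.sum_dotProduct_smul_eigenvectorBasis y]
  simp only [mulVec_sum, mulVec_smul, hA.mulVec_eigenvectorBasis, dotProduct_sum,
    dotProduct_smul, smul_eq_mul]
  refine sum_congr rfl fun k _ => ?_
  rw [dotProduct_comm y]
  ring

theorem mul_dotProduct_self_le_of_dotProduct_eigenvectorBasis_eq_zero {t : ℝ} {k₀ : n}
    (ht : ∀ k ≠ k₀, t ≤ hA.eigenvalues k) {y : n → ℝ} (hy : hA.eigenvectorBasis k₀ ⬝ᵥ y = 0) :
    t * (y ⬝ᵥ y) ≤ y ⬝ᵥ (A *ᵥ y) := by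
  rw [hA.dotProduct_self_eq_sum_sq, hA.dotProduct_mulVec_eq_sum, mul_sum]
  refine sum_le_sum fun k _ => ?_
  obtain rfl | hk := eq_or_ne k k₀
  · simp [hy]
  · exact mul_le_mul_of_nonneg_right (ht k hk) (sq_nonneg _)

theorem mul_dotProduct_self_le_of_mulVec_eq_zero {t : ℝ} {k₀ : n}
    (ht : ∀ k ≠ k₀, t ≤ hA.eigenvalues k) {u x : n → ℝ} (hu₀ : u ≠ 0) (hu : A *ᵥ u = 0)
    (hxu : u ⬝ᵥ x = 0) (hx : 0 ≤ x ⬝ᵥ (A *ᵥ x)) :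
    t * (x ⬝ᵥ x) ≤ x ⬝ᵥ (A *ᵥ x) := by
  have hself : ∀ z : n → ℝ, 0 ≤ z ⬝ᵥ z := fun z => sum_nonneg fun i _ => mul_self_nonneg (z i)
  rcases le_or_gt t 0 with ht₀ | ht₀
  · exact (mul_nonpos_of_nonpos_of_nonneg ht₀ (hself x)).trans hx
  set v : n → ℝ := ⇑(hA.eigenvectorBasis k₀)
  set c := v ⬝ᵥ x
  set d := v ⬝ᵥ u
  have huA : u ᵥ* A = 0 := by
    rw [← hA.eq, conjTranspose_eq_transpose_of_trivial, vecMul_transpose, hu]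
  -- otherwise the bound applied to `u` itself would give `t * (u ⬝ᵥ u) ≤ 0`
  have hd : d ≠ 0 := by
    intro hd
    have h := hA.mul_dotProduct_self_le_of_dotProduct_eigenvectorBasis_eq_zero ht hd
    rw [hu, dotProduct_zero] at h
    exact hu₀ (dotProduct_self_eq_zero.mp
      (le_antisymm (nonpos_of_mul_nonpos_right h ht₀) (hself u)))
  have hy := hA.mul_dotProduct_self_le_of_dotProduct_eigenvectorBasis_eq_zero ht
    (y := c • u - d • x) (by simp only [dotProduct_sub, dotProduct_smul, smul_eq_mul]; ring)
  have hyy : (c • u - d • x) ⬝ᵥ (c • u - d • x) = c ^ 2 * (u ⬝ᵥ u) + d ^ 2 * (x ⬝ᵥ x) := by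
    simp only [sub_dotProduct, dotProduct_sub, smul_dotProduct, dotProduct_smul, smul_eq_mul,
      hxu, dotProduct_comm x u]
    ring
  have hyAy : (c • u - d • x) ⬝ᵥ (A *ᵥ (c • u - d • x)) = d ^ 2 * (x ⬝ᵥ (A *ᵥ x)) := by
    simp only [mulVec_sub, mulVec_smul, hu, smul_zero, zero_sub, dotProduct_neg, sub_dotProduct,
      smul_dotProduct, dotProduct_smul, smul_eq_mul, dotProduct_mulVec u, huA, zero_dotProduct]
    ring
  rw [hyy, hyAy] at hy
  refine le_of_mul_le_mul_left ?_ (by positivity : 0 < d ^ 2)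
  calc d ^ 2 * (t * (x ⬝ᵥ x)) ≤ t * (c ^ 2 * (u ⬝ᵥ u) + d ^ 2 * (x ⬝ᵥ x)) := by
        have := mul_nonneg ht₀.le (mul_nonneg (sq_nonneg c) (hself u))
        linarith
    _ ≤ d ^ 2 * (x ⬝ᵥ (A *ᵥ x)) := hy

end Matrix.IsHermitian

theorem Monotone.apply_le_of_eq_comp_perm {ι α : Type*} [LinearOrder ι] [Preorder α]
    {μ f : ι → α} (hμ : Monotone μ) {σ : Equiv.Perm ι} (hσ : ∀ i, μ i = f (σ i)) {j k : ι}
    (hk : ∀ i < j, σ i ≠ k) :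
    μ j ≤ f k := by
  rw [← σ.apply_symm_apply k, ← hσ]
  exact hμ (not_lt.mp fun h => hk _ h (σ.apply_symm_apply k))

section Laplacian

variable {ι : Type*} [Fintype ι] [DecidableEq ι]

def laplacian (w : ι → ι → ℝ) : Matrix ι ι ℝ :=
  Matrix.of fun i j => (if i = j then ∑ k, w i k else 0) - w i j

theorem laplacian_mulVec_apply (w : ι → ι → ℝ) (x : ι → ℝ) (i : ι) :
    (laplacian w *ᵥ x) i = ∑ j, w i j * (x i - x j) := by
  simp only [laplacian, mulVec, dotProduct, of_apply, sub_mul, ite_mul, zero_mul, sum_sub_distrib,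
    sum_ite_eq, mem_univ, if_true, sum_mul, mul_sub]

theorem laplacian_mulVec_one (w : ι → ι → ℝ) : laplacian w *ᵥ 1 = 0 := by
  ext i
  simp [laplacian_mulVec_apply]

theorem dotProduct_laplacian_mulVec (w : ι → ι → ℝ) (x : ι → ℝ) :
    x ⬝ᵥ (laplacian w *ᵥ x) = ∑ i, ∑ j, w i j * (x i * (x i - x j)) := by
  simp only [dotProduct, laplacian_mulVec_apply, mul_sum]
  exact sum_congr rfl fun i _ => sum_congr rfl fun j _ => by ring

def cutVector (S : Finset ι) (i : ι) : ℝ := if i ∈ S then (#Sᶜ : ℝ) else -#S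

variable {S : Finset ι}

theorem cutVector_of_mem {i : ι} (hi : i ∈ S) : cutVector S i = #Sᶜ := if_pos hi

theorem cutVector_of_mem_compl {i : ι} (hi : i ∈ Sᶜ) : cutVector S i = -#S :=
  if_neg (mem_compl.mp hi)

variable (S)

theorem one_dotProduct_cutVector : 1 ⬝ᵥ cutVector S = 0 := by
  rw [one_dotProduct, ← sum_add_sum_compl S]
  simp +contextual only [cutVector_of_mem, cutVector_of_mem_compl, sum_const, nsmul_eq_mul]
  ring

theorem cutVector_dotProduct_self :
    cutVector S ⬝ᵥ cutVector S = #S * #Sᶜ * Fintype.card ι := by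
  rw [dotProduct, ← sum_add_sum_compl S, ← S.card_add_card_compl, Nat.cast_add]
  simp +contextual only [cutVector_of_mem, cutVector_of_mem_compl, sum_const, nsmul_eq_mul]
  ring

theorem cutVector_dotProduct_laplacian_mulVec (w : ι → ι → ℝ) :
    cutVector S ⬝ᵥ (laplacian w *ᵥ cutVector S) =
      Fintype.card ι * (#Sᶜ * ∑ i ∈ S, ∑ j ∈ Sᶜ, w i j + #S * ∑ i ∈ Sᶜ, ∑ j ∈ S, w i j) := by
  simp only [dotProduct_laplacian_mulVec, ← sum_add_sum_compl S, sum_add_distrib]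
  simp +contextual only [cutVector_of_mem, cutVector_of_mem_compl, sub_self, mul_zero,
    sum_const_zero, zero_add, add_zero]
  simp only [← sum_mul]
  rw [← S.card_add_card_compl, Nat.cast_add]
  ring

end Laplacian

theorem stmt_7 (N : ℕ) (hN : 2 ≤ N) (w : Fin N → Fin N → ℝ)
    (hnn : ∀ i j, 0 ≤ w i j)
    (L : Matrix (Fin N) (Fin N) ℝ)
    (hLdef : L = Matrix.of fun i j => (if i = j then ∑ k, w i k else 0) - w i j)
    (hherm : L.IsHermitian)
    (μ : Fin N → ℝ) (hmono : Monotone μ)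
    (hperm : ∃ σ : Equiv.Perm (Fin N), ∀ i, μ i = hherm.eigenvalues (σ i))
    (S₁ S₂ : Finset (Fin N)) (h1 : S₁.Nonempty) (h2 : S₂.Nonempty)
    (hdisj : Disjoint S₁ S₂) (hunion : S₁ ∪ S₂ = Finset.univ) :
    μ ⟨1, by omega⟩ ≤
      (∑ i ∈ S₁, ∑ j ∈ S₂, w i j) / (S₁.card : ℝ) +
      (∑ i ∈ S₂, ∑ j ∈ S₁, w i j) / (S₂.card : ℝ) := by
  obtain ⟨σ, hσ⟩ := hperm
  have hsecond : ∀ k ≠ σ ⟨0, by omega⟩, μ ⟨1, by omega⟩ ≤ hherm.eigenvalues k :=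
    fun k hk => hmono.apply_le_of_eq_comp_perm hσ fun i hi =>
      (Fin.ext (Nat.lt_one_iff.mp hi) : i = ⟨0, _⟩) ▸ hk.symm
  obtain rfl : S₂ = S₁ᶜ := eq_compl_iff_isCompl.mpr
    ⟨hdisj.symm, codisjoint_iff.mpr (by rw [sup_comm]; exact hunion)⟩
  have hL : L = laplacian w := hLdef
  have hquad : cutVector S₁ ⬝ᵥ (L *ᵥ cutVector S₁) = N *
      (#S₁ᶜ * ∑ i ∈ S₁, ∑ j ∈ S₁ᶜ, w i j + #S₁ * ∑ i ∈ S₁ᶜ, ∑ j ∈ S₁, w i j) := by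
    rw [hL, cutVector_dotProduct_laplacian_mulVec, Fintype.card_fin]
  have hcut : ∀ A B : Finset (Fin N), 0 ≤ ∑ i ∈ A, ∑ j ∈ B, w i j :=
    fun A B => sum_nonneg fun i _ => sum_nonneg fun j _ => hnn i j
  have hbound := hherm.mul_dotProduct_self_le_of_mulVec_eq_zero hsecond
    (fun h => one_ne_zero (α := ℝ) (congrFun h ⟨0, by omega⟩)) (hL ▸ laplacian_mulVec_one w)
    (one_dotProduct_cutVector S₁)
    (by rw [hquad]; have := hcut S₁ S₁ᶜ; have := hcut S₁ᶜ S₁; positivity)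
  rw [hquad, cutVector_dotProduct_self, Fintype.card_fin] at hbound
  have hn₁ : (0 : ℝ) < #S₁ := by exact_mod_cast h1.card_pos
  have hn₂ : (0 : ℝ) < #S₁ᶜ := by exact_mod_cast h2.card_pos
  have hN₀ : (0 : ℝ) < N := by exact_mod_cast (by omega : 0 < N)
  rw [div_add_div _ _ hn₁.ne' hn₂.ne', le_div_iff₀ (by positivity)]
  refine le_of_mul_le_mul_right ?_ hN₀
  linear_combination hbound
end

section
/- Brauer's theorem: Let M ∈ ℂ^{n×n} have eigenvalues λ₁,…,λ_n (with multiplicity), let v be a right eigenvector of M for λ_k (M v = λ_k v, v ≠ 0), and let q ∈ ℂⁿ be arbitrary. Then the eigenvalues of M + v qᵀ are λ₁, …, λ_{k−1}, λ_k + qᵀv, λ_{k+1}, …, λ_n. -/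
/-!
If `A u = μ u` then `A (μ - u wᵀ) = μ (A - u wᵀ)`, so taking determinants
`μⁿ det (A - u wᵀ) = det A · det (μ - u wᵀ)`, and the last factor is the characteristic
polynomial of the rank-one matrix `u wᵀ` evaluated at `μ`, namely `μⁿ⁻¹ (μ - wᵀu)`.
Applied over `R[X]` to `A = X - M`, `u = v`, `μ = X - λ`, and cancelling the monic factor
`(X - λ)ⁿ`, this gives Brauer's identity over any commutative ring.
-/

open Matrix Polynomial

namespace Matrix

variable {n R : Type*} [Fintype n] [DecidableEq n] [CommRing R]

theorem charpoly_vecMulVec_mul_X (u w : n → R) :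
    (vecMulVec u w).charpoly * X = X ^ Fintype.card n * (X - C (w ⬝ᵥ u)) := by
  rw [charpoly_vecMulVec, dotProduct_comm]
  cases isEmpty_or_nonempty n
  · simp
  · rw [smul_eq_C_mul, sub_mul, mul_sub, mul_assoc, ← pow_succ, ← pow_succ,
      Nat.sub_add_cancel Fintype.card_pos, mul_comm (C _)]

theorem det_scalar_sub_vecMulVec_mul (μ : R) (u w : n → R) :
    (scalar n μ - vecMulVec u w).det * μ = μ ^ Fintype.card n * (μ - w ⬝ᵥ u) := by
  simpa [eval_charpoly] using congr_arg (eval μ) (charpoly_vecMulVec_mul_X u w)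

theorem det_sub_vecMulVec_mul_of_mulVec_eq_smul {A : Matrix n n R} {u : n → R} {μ : R}
    (hμ : μ ∈ nonZeroDivisors R) (hAu : A *ᵥ u = μ • u) (w : n → R) :
    (A - vecMulVec u w).det * μ = A.det * (μ - w ⬝ᵥ u) := by
  have hfactor : μ • (A - vecMulVec u w) = A * (scalar n μ - vecMulVec u w) := by
    rw [mul_sub, mul_vecMulVec, hAu, smul_sub, smul_vecMulVec, scalar_apply,
      ← smul_one_eq_diagonal, Matrix.mul_smul, mul_one]
  have hdet := congr_arg det hfactor
  rw [det_smul, det_mul] at hdet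
  rw [← mul_cancel_left_mem_nonZeroDivisors (pow_mem hμ (Fintype.card n)), ← mul_assoc, hdet,
    mul_assoc, det_scalar_sub_vecMulVec_mul, mul_left_comm]

theorem charmatrix_add_vecMulVec (M : Matrix n n R) (v q : n → R) :
    charmatrix (M + vecMulVec v q) = charmatrix M - vecMulVec (C ∘ v) (C ∘ q) := by
  ext i j
  simp [charmatrix_apply, vecMulVec_apply, sub_sub]

theorem charmatrix_mulVec_of_mulVec_eq_smul {M : Matrix n n R} {v : n → R} {lam : R}
    (hev : M *ᵥ v = lam • v) : charmatrix M *ᵥ (C ∘ v) = (X - C lam) • (C ∘ v) := by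
  ext i
  rw [charmatrix, sub_mulVec, RingHom.mapMatrix_apply, Pi.sub_apply, ← RingHom.map_mulVec, hev,
    scalar_apply, mulVec_diagonal]
  simp only [Pi.smul_apply, Function.comp_apply, smul_eq_mul, map_mul, sub_mul]

theorem charpoly_add_vecMulVec_mul_of_mulVec_eq_smul {M : Matrix n n R} {v : n → R} {lam : R}
    (hev : M *ᵥ v = lam • v) (q : n → R) :
    (M + vecMulVec v q).charpoly * (X - C lam) = M.charpoly * (X - C (lam + q ⬝ᵥ v)) := by
  rw [charpoly, charmatrix_add_vecMulVec, det_sub_vecMulVec_mul_of_mulVec_eq_smul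
    (monic_X_sub_C lam).mem_nonZeroDivisors (charmatrix_mulVec_of_mulVec_eq_smul hev),
    ← RingHom.map_dotProduct, C_add, sub_sub, charpoly]

end Matrix

theorem stmt_8_general (n : ℕ) (M : Matrix (Fin n) (Fin n) ℂ)
    (v : Fin n → ℂ) (lam : ℂ) (hev : M.mulVec v = lam • v)
    (q : Fin n → ℂ) :
    (M + Matrix.vecMulVec v q).charpoly * (X - C lam) =
      M.charpoly * (X - C (lam + q ⬝ᵥ v)) :=
  charpoly_add_vecMulVec_mul_of_mulVec_eq_smul hev q

theorem stmt_8 (n : ℕ) (M : Matrix (Fin n) (Fin n) ℂ)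
    (v : Fin n → ℂ) (hv : v ≠ 0) (lam : ℂ) (hev : M.mulVec v = lam • v)
    (q : Fin n → ℂ) :
    (M + Matrix.vecMulVec v q).charpoly * (X - C lam) =
      M.charpoly * (X - C (lam + q ⬝ᵥ v)) :=
  stmt_8_general n M v lam hev q
end

section
/- Let (A, C) be an observable pair with A ∈ ℝ^{n×n}, C ∈ ℝ^{p×n}. Then for any measurable set Ω ⊆ [0,T] (T > 0) with positive Lebesgue measure, the matrix ∫_Ω (e^{Aμ})ᵀ Cᵀ C e^{Aμ} dμ is positive definite. -/
/-!
If `x ≠ 0`, the curve `v t = C e^{tA} x` is not identically zero: otherwise differentiating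
`k` times at `t = 0` gives `C A^k x = 0` for every `k`, so `x` lies in the kernel of the
observability matrix, which has full column rank. Hence `t ↦ v t ⬝ᵥ v t` is a nonnegative
real-analytic function that is not identically zero; its zero set is discrete, so Lebesgue-null,
and its integral over any set of positive measure is positive.
-/

open Matrix MeasureTheory Set

theorem AnalyticOnNhd.dotProduct {𝕜 E m : Type*} [NontriviallyNormedField 𝕜]
    [NormedAddCommGroup E] [NormedSpace 𝕜 E] [Fintype m] {f g : E → m → 𝕜} {s : Set E}
    (hf : AnalyticOnNhd 𝕜 f s) (hg : AnalyticOnNhd 𝕜 g s) :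
    AnalyticOnNhd 𝕜 (fun x => f x ⬝ᵥ g x) s := fun x hx =>
  Finset.analyticAt_fun_sum _ fun i _ =>
    (analyticAt_pi_iff.mp (hf x hx) i).mul (analyticAt_pi_iff.mp (hg x hx) i)

theorem AnalyticOnNhd.ae_ne_zero {E : Type*} [NormedAddCommGroup E] [NormedSpace ℝ E]
    {f : ℝ → E} (hf : AnalyticOnNhd ℝ f univ) {t₀ : ℝ} (ht₀ : f t₀ ≠ 0) :
    ∀ᵐ t, f t ≠ 0 := by
  have := ae_restrict_le_codiscreteWithin (μ := volume) MeasurableSet.univ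
    (hf.preimage_zero_mem_codiscrete ht₀)
  rwa [Measure.restrict_univ] at this

theorem AnalyticOnNhd.setIntegral_pos {f : ℝ → ℝ} (hf : AnalyticOnNhd ℝ f univ)
    (hf_nonneg : 0 ≤ f) {t₀ : ℝ} (ht₀ : f t₀ ≠ 0) {s : Set ℝ} (hs : 0 < volume s)
    (hfs : IntegrableOn f s) :
    0 < ∫ t in s, f t := by
  rwa [setIntegral_pos_iff_support_of_nonneg_ae (.of_forall hf_nonneg) hfs, inter_comm,
    measure_inter_conull (t := Function.support f) (hf.ae_ne_zero ht₀)]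

namespace Matrix

theorem mulVec_injective_of_rank_eq {m n K : Type*} [Fintype n] [Field K] {M : Matrix m n K}
    (h : M.rank = Fintype.card n) : Function.Injective M.mulVec :=
  mulVec_injective_iff.mpr <| linearIndependent_iff_card_eq_finrank_span.mpr <| by
    rw [Set.finrank, ← rank_eq_finrank_span_cols, h]

section Observability

variable {m n R : Type*} [Fintype n]

def observabilityMatrix [Semiring R] [DecidableEq n] (N : ℕ) (A : Matrix n n R)
    (C : Matrix m n R) : Matrix (Fin N × m) n R :=
  of fun q j => (C * A ^ (q.1 : ℕ)) q.2 j

theorem eq_zero_of_forall_mul_pow_mulVec_eq_zero [Field R] [DecidableEq n] {N : ℕ}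
    {A : Matrix n n R} {C : Matrix m n R}
    (hobs : (observabilityMatrix N A C).rank = Fintype.card n) {x : n → R}
    (hx : ∀ k : ℕ, (C * A ^ k) *ᵥ x = 0) : x = 0 :=
  mulVec_injective_of_rank_eq hobs <| by
    rw [mulVec_zero]
    exact funext fun q => congrFun (hx q.1) q.2

end Observability

section Exponential

-- Any submultiplicative norm would do; it is only needed to see `NormedSpace.exp` as analytic.
attribute [local instance] Matrix.linftyOpNormedRing Matrix.linftyOpNormedAlgebra

variable {m n : Type*} [Fintype m] [Fintype n] [DecidableEq n]

noncomputable def mulVecMulVecCLM (B : Matrix m n ℝ) (x : n → ℝ) :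
    Matrix n n ℝ →L[ℝ] (m → ℝ) :=
  (B.mulVecLin ∘ₗ (mulVecBilin ℝ ℝ).flip x).toContinuousLinearMap

theorem analyticOnNhd_mulVec_exp_smul_mulVec (A : Matrix n n ℝ) (B : Matrix m n ℝ)
    (x : n → ℝ) :
    AnalyticOnNhd ℝ (fun t : ℝ => B *ᵥ (NormedSpace.exp (t • A) *ᵥ x)) univ := fun t _ =>
  (mulVecMulVecCLM B x).analyticAt _ |>.comp <|
    (NormedSpace.exp_analytic (t • A)).comp_of_eq (analyticAt_id.smul analyticAt_const) rfl

theorem hasDerivAt_mulVec_exp_smul_mulVec (A : Matrix n n ℝ) (B : Matrix m n ℝ) (x : n → ℝ)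
    (t : ℝ) :
    HasDerivAt (fun s : ℝ => B *ᵥ (NormedSpace.exp (s • A) *ᵥ x))
      ((B * A) *ᵥ (NormedSpace.exp (t • A) *ᵥ x)) t := by
  refine ((mulVecMulVecCLM B x).hasFDerivAt.comp_hasDerivAt t
    (hasDerivAt_exp_smul_const' A t)).congr_deriv ?_
  change B *ᵥ ((A * NormedSpace.exp (t • A)) *ᵥ x) = _
  simp only [mulVec_mulVec, Matrix.mul_assoc]

theorem mul_pow_mulVec_eq_zero_of_forall_exp {A : Matrix n n ℝ} {B : Matrix m n ℝ}
    {x : n → ℝ} (h : ∀ t : ℝ, B *ᵥ (NormedSpace.exp (t • A) *ᵥ x) = 0) (k : ℕ) :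
    (B * A ^ k) *ᵥ x = 0 := by
  induction k generalizing B with
  | zero => simpa using h 0
  | succ k ih =>
    rw [pow_succ', ← Matrix.mul_assoc]
    exact ih fun t => (hasDerivAt_mulVec_exp_smul_mulVec A B x t).unique <|
      (hasDerivAt_const t 0).congr_of_eventuallyEq (.of_forall h)

end Exponential

end Matrix

theorem stmt_11_general (n p : ℕ) (A : Matrix (Fin n) (Fin n) ℝ) (C : Matrix (Fin p) (Fin n) ℝ)
    (hobs : (Matrix.of fun (q : Fin n × Fin p) (j : Fin n) =>
        (C * A ^ (q.1 : ℕ)) q.2 j).rank = n)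
    (T : ℝ) (Ω : Set ℝ) (hΩ : Ω ⊆ Set.Icc 0 T)
    (hpos : 0 < volume Ω) :
    ∀ x : Fin n → ℝ, x ≠ 0 →
      0 < ∫ μ in Ω,
        (C.mulVec ((NormedSpace.exp (μ • A)).mulVec x)) ⬝ᵥ
          (C.mulVec ((NormedSpace.exp (μ • A)).mulVec x)) := by
  intro x hx
  have hv := analyticOnNhd_mulVec_exp_smul_mulVec A C x
  obtain ⟨t₀, ht₀⟩ : ∃ t₀ : ℝ, C *ᵥ (NormedSpace.exp (t₀ • A) *ᵥ x) ≠ 0 := by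
    by_contra! h
    exact hx <| eq_zero_of_forall_mul_pow_mulVec_eq_zero (N := n) (by rwa [Fintype.card_fin])
      (mul_pow_mulVec_eq_zero_of_forall_exp h)
  have hf := hv.dotProduct hv
  exact hf.setIntegral_pos (fun t => Fintype.sum_nonneg fun i => mul_self_nonneg _)
    (t₀ := t₀) (dotProduct_self_eq_zero.not.mpr ht₀) hpos
    ((hf.continuousOn.mono (subset_univ _)).integrableOn_Icc.mono_set hΩ)

theorem stmt_11 (n p : ℕ) (A : Matrix (Fin n) (Fin n) ℝ) (C : Matrix (Fin p) (Fin n) ℝ)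
    (hobs : (Matrix.of fun (q : Fin n × Fin p) (j : Fin n) =>
        (C * A ^ (q.1 : ℕ)) q.2 j).rank = n)
    (T : ℝ) (hT : 0 < T) (Ω : Set ℝ) (hΩ : Ω ⊆ Set.Icc 0 T)
    (hmeas : MeasurableSet Ω) (hpos : 0 < volume Ω) :
    ∀ x : Fin n → ℝ, x ≠ 0 →
      0 < ∫ μ in Ω,
        (C.mulVec ((NormedSpace.exp (μ • A)).mulVec x)) ⬝ᵥ
          (C.mulVec ((NormedSpace.exp (μ • A)).mulVec x)) :=
  stmt_11_general n p A C hobs T Ω hΩ hpos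
end

section
/- Let w : [0,∞) → ℝ be bounded with |w(t)| ≤ w*, and suppose w satisfies: (i) on every interval where w is continuous, |w(s) − w(p)| ≤ c|s − p|; (ii) there exist contiguous intervals [s_j, s_{j+1}) covering [0,∞) on which w is continuous, with jump bound |w(s_j⁺) − w(s_j⁻)| ≤ ĉ|s_{j−1} − s_j| for all j ≥ 1. Then for every T > 0 and every ε > 0 there exists η > 0 such that for all r ≥ 0 and all 0 < h ≤ η, ∫₀^{T−h} |w(r+t) − w(r+t+h)| dt ≤ ε; i.e., the shift-continuity in L¹ holds uniformly over the translates of w. -/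
/-!
Between two points `x ≤ y`, `w` varies by at most `c (y - x)` plus the jumps at the breakpoints
`s i ∈ (x, y]`. For `y = x + h` a given breakpoint is crossed only for `t` in a window of length
`h`, so integrating costs `c h T` plus `h` times the total jump inside `(r, r + T]`. The first of
those jumps is at most `2 w*`; every later one is at most `ĉ` times the length of the preceding
interval, and these intervals lie inside the window, giving `2 w* + ĉ T`.
-/

open MeasureTheory Set intervalIntegral Filter
open scoped Topology

noncomputable def nextBreak (s : ℕ → ℝ) (x : ℝ) : ℕ := sInf {n | x < s n}

section nextBreak

variable {s : ℕ → ℝ} {x y : ℝ} {i : ℕ}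

lemma lt_nextBreak (htop : Tendsto s atTop atTop) (x : ℝ) : x < s (nextBreak s x) :=
  Nat.sInf_mem (htop.eventually_gt_atTop x).exists

lemma le_of_lt_nextBreak (hi : i < nextBreak s x) : s i ≤ x :=
  not_lt.1 (Nat.notMem_of_lt_sInf hi)

lemma nextBreak_le_iff (hmono : StrictMono s) (htop : Tendsto s atTop atTop) :
    nextBreak s x ≤ i ↔ x < s i :=
  ⟨fun h => (lt_nextBreak htop x).trans_le (hmono.monotone h), fun h => Nat.sInf_le h⟩

lemma nextBreak_mono (htop : Tendsto s atTop atTop) : Monotone (nextBreak s) :=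
  fun _ y hxy => Nat.sInf_le (hxy.trans_lt (lt_nextBreak htop y))

lemma nextBreak_apply (hmono : StrictMono s) (htop : Tendsto s atTop atTop) (j : ℕ) :
    nextBreak s (s j) = j + 1 :=
  eq_of_forall_ge_iff fun _ => (nextBreak_le_iff hmono htop).trans hmono.lt_iff_lt

lemma mem_Ico_nextBreak (hmono : StrictMono s) (htop : Tendsto s atTop atTop) :
    i ∈ Finset.Ico (nextBreak s x) (nextBreak s y) ↔ x < s i ∧ s i ≤ y := by
  rw [Finset.mem_Ico, ← not_le (a := nextBreak s y)]
  exact and_congr (nextBreak_le_iff hmono htop) ((nextBreak_le_iff hmono htop).not.trans not_lt)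

lemma exists_nextBreak_eq_succ (htop : Tendsto s atTop atTop) (hx : s 0 ≤ x) :
    ∃ j, nextBreak s x = j + 1 ∧ x ∈ Ico (s j) (s (j + 1)) := by
  have hpos : 0 < nextBreak s x := Nat.pos_of_ne_zero fun h0 => by
    have := lt_nextBreak htop x
    rw [h0] at this
    linarith
  obtain ⟨j, hj⟩ := Nat.exists_eq_add_one.2 hpos
  exact ⟨j, hj, le_of_lt_nextBreak (hj ▸ j.lt_succ_self), hj ▸ lt_nextBreak htop x⟩

end nextBreak

lemma abs_sub_le_of_tendsto_nhdsLT {w : ℝ → ℝ} {c a b ℓ : ℝ}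
    (hlip : ∀ t₁ ∈ Ico a b, ∀ t₂ ∈ Ico a b, |w t₁ - w t₂| ≤ c * |t₁ - t₂|)
    (hℓ : Tendsto w (𝓝[<] b) (𝓝 ℓ)) {t : ℝ} (ht : t ∈ Ico a b) :
    |w t - ℓ| ≤ c * (b - t) := by
  have hlim : Tendsto (fun u => c * |t - u|) (𝓝[<] b) (𝓝 (c * |t - b|)) :=
    ((continuous_const.sub continuous_id).abs.const_mul c).continuousWithinAt
  rw [← abs_of_nonneg (sub_nonneg.2 ht.2.le), abs_sub_comm b t]
  refine le_of_tendsto_of_tendsto ((tendsto_const_nhds.sub hℓ).abs) hlim ?_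
  filter_upwards [Ioo_mem_nhdsLT ht.2] with u hu
  exact hlip t ht u ⟨ht.1.trans hu.1.le, hu.2⟩

lemma sum_Ico_succ_le_add_mul_sub {J s : ℕ → ℝ} {κ : ℝ}
    (hJ : ∀ i, J (i + 1) ≤ κ * (s (i + 1) - s i)) {a b : ℕ} (hab : a ≤ b) :
    ∑ i ∈ Finset.Ico a (b + 1), J i ≤ J a + κ * (s b - s a) := by
  induction b, hab using Nat.le_induction with
  | base => simp
  | succ b hab ih =>
    rw [Finset.sum_Ico_succ_top (by omega)]
    linarith [hJ b]

lemma integral_le_of_le_add_sum_indicator {ι : Type*} {f : ℝ → ℝ} {M h κ : ℝ} (F : Finset ι)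
    (J a : ι → ℝ) (hM : 0 ≤ M) (hh : 0 ≤ h) (hf : 0 ≤ f) (hJ : ∀ i, 0 ≤ J i)
    (hle : ∀ t ∈ Ioc 0 M, f t ≤ κ + ∑ i ∈ F, J i * (Ico (a i) (a i + h)).indicator 1 t) :
    ∫ t in 0..M, f t ≤ κ * M + (∑ i ∈ F, J i) * h := by
  have hbumps : Integrable (fun t => ∑ i ∈ F, J i * (Ico (a i) (a i + h)).indicator 1 t)
      (volume.restrict (Ioc 0 M)) :=
    integrable_finsetSum F fun i _ => ((integrable_const 1).indicator measurableSet_Ico).const_mul _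
  have hvol (i : ι) : (volume.restrict (Ioc 0 M)).real (Ico (a i) (a i + h)) ≤ h := by
    rw [measureReal_restrict_apply measurableSet_Ico]
    calc volume.real (Ico (a i) (a i + h) ∩ Ioc 0 M) ≤ volume.real (Ico (a i) (a i + h)) :=
          measureReal_mono inter_subset_left measure_Ico_lt_top.ne
      _ = h := by simp [hh]
  rw [integral_of_le hM]
  -- `integral_mono_of_nonneg` needs no integrability of `f`: otherwise its integral is `0`.
  calc ∫ t in Ioc 0 M, f t
      ≤ ∫ t in Ioc 0 M, (κ + ∑ i ∈ F, J i * (Ico (a i) (a i + h)).indicator 1 t) :=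
        integral_mono_of_nonneg (ae_of_all _ hf) ((integrable_const κ).add hbumps)
          ((ae_restrict_iff' measurableSet_Ioc).2 (ae_of_all _ hle))
    _ = κ * M + ∑ i ∈ F, J i * (volume.restrict (Ioc 0 M)).real (Ico (a i) (a i + h)) := by
        rw [integral_add (integrable_const κ) hbumps, integral_finsetSum F fun i _ =>
          ((integrable_const 1).indicator measurableSet_Ico).const_mul _]
        simp only [MeasureTheory.integral_const_mul, integral_indicator_one measurableSet_Ico,
          setIntegral_const, Real.volume_real_Ioc_of_le hM, smul_eq_mul, sub_zero, mul_comm _ κ]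
    _ ≤ κ * M + (∑ i ∈ F, J i) * h := by
        rw [Finset.sum_mul]
        gcongr with i
        · exact hJ i
        · exact hvol i

/-- The jump of `w` at the breakpoint `s i`; `L j` stands for the left limit at `s (j + 1)`. -/
def jumpAt (w : ℝ → ℝ) (s L : ℕ → ℝ) : ℕ → ℝ
  | 0 => 0
  | j + 1 => |w (s (j + 1)) - L j|

section jumpAt

variable {w : ℝ → ℝ} {s L : ℕ → ℝ} {wstar c chat : ℝ}

theorem abs_sub_le_add_sum_jumpAt (hmono : StrictMono s) (htop : Tendsto s atTop atTop)
    (hlip : ∀ j, ∀ t₁ ∈ Ico (s j) (s (j + 1)), ∀ t₂ ∈ Ico (s j) (s (j + 1)),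
      |w t₁ - w t₂| ≤ c * |t₁ - t₂|)
    (hL : ∀ j, Tendsto w (𝓝[<] s (j + 1)) (𝓝 (L j))) {x y : ℝ} (hx : s 0 ≤ x) (hxy : x ≤ y) :
    |w x - w y| ≤
      c * (y - x) + ∑ i ∈ Finset.Ico (nextBreak s x) (nextBreak s y), jumpAt w s L i := by
  obtain ⟨k, hk⟩ : ∃ k, nextBreak s y - nextBreak s x = k := ⟨_, rfl⟩
  induction k generalizing x with
  | zero =>
    obtain ⟨j, hj, hxj⟩ := exists_nextBreak_eq_succ htop hx
    have hyx : nextBreak s y = nextBreak s x :=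
      le_antisymm (Nat.sub_eq_zero_iff_le.1 hk) (nextBreak_mono htop hxy)
    have hyj : y ∈ Ico (s j) (s (j + 1)) := ⟨hxj.1.trans hxy, hj ▸ hyx ▸ lt_nextBreak htop y⟩
    rw [hyx, Finset.Ico_self, Finset.sum_empty, add_zero, ← abs_of_nonneg (sub_nonneg.2 hxy),
      abs_sub_comm y x]
    exact hlip j x hxj y hyj
  | succ k ih =>
    obtain ⟨j, hj, hxj⟩ := exists_nextBreak_eq_succ htop hx
    have hlt : nextBreak s x < nextBreak s y := by omega
    have hzy : s (j + 1) ≤ y := le_of_lt_nextBreak (hj ▸ hlt)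
    have hz : nextBreak s (s (j + 1)) = nextBreak s x + 1 := by
      rw [nextBreak_apply hmono htop, hj]
    have hjump : |w (s (j + 1)) - L j| = jumpAt w s L (nextBreak s x) := by rw [hj, jumpAt]
    have hleft := abs_sub_le_of_tendsto_nhdsLT (hlip j) (hL j) hxj
    have hright := ih (hmono.monotone (Nat.zero_le _)) hzy (by omega)
    rw [hz] at hright
    rw [Finset.sum_eq_sum_Ico_succ_bot hlt, ← hjump]
    calc |w x - w y| ≤ |w x - L j| + |L j - w (s (j + 1))| + |w (s (j + 1)) - w y| :=
          (abs_sub_le _ _ _).trans (add_le_add_left (abs_sub_le _ _ _) _)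
      _ ≤ _ := by rw [abs_sub_comm (L j)]; linarith

lemma jumpAt_nonneg (i : ℕ) : 0 ≤ jumpAt w s L i := by
  cases i <;> simp [jumpAt]

lemma jumpAt_le (hbdd : ∀ t, |w t| ≤ wstar) (hL : ∀ j, Tendsto w (𝓝[<] s (j + 1)) (𝓝 (L j)))
    (i : ℕ) : jumpAt w s L i ≤ 2 * wstar := by
  cases i with
  | zero => rw [jumpAt]; linarith [(abs_nonneg _).trans (hbdd 0)]
  | succ j =>
    have hLj : |L j| ≤ wstar := le_of_tendsto (hL j).abs (Eventually.of_forall hbdd)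
    rw [jumpAt]
    linarith [abs_sub (w (s (j + 1))) (L j), hbdd (s (j + 1))]

lemma sum_jumpAt_le (hbdd : ∀ t, |w t| ≤ wstar) (hchat : 0 ≤ chat) (htop : Tendsto s atTop atTop)
    (hL : ∀ j, Tendsto w (𝓝[<] s (j + 1)) (𝓝 (L j)))
    (hjump : ∀ j, |w (s (j + 1)) - L j| ≤ chat * (s (j + 1) - s j)) {r T : ℝ} (hT : 0 ≤ T) :
    ∑ i ∈ Finset.Ico (nextBreak s r) (nextBreak s (r + T)), jumpAt w s L i ≤
      2 * wstar + chat * T := by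
  rcases Nat.lt_or_ge (nextBreak s r) (nextBreak s (r + T)) with hlt | hle
  · obtain ⟨b, hb⟩ := Nat.exists_eq_add_one.2 (Nat.zero_lt_of_lt hlt)
    have hsb : s b ≤ r + T := le_of_lt_nextBreak (hb ▸ b.lt_succ_self)
    have hsa := lt_nextBreak htop r
    rw [hb]
    calc _ ≤ jumpAt w s L (nextBreak s r) + chat * (s b - s (nextBreak s r)) :=
          sum_Ico_succ_le_add_mul_sub hjump (by omega)
      _ ≤ 2 * wstar + chat * T := by
          gcongr
          · exact jumpAt_le hbdd hL _
          · linarith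
  · rw [Finset.Ico_eq_empty_of_le hle, Finset.sum_empty]
    linarith [(abs_nonneg _).trans (hbdd 0), mul_nonneg hchat hT]

theorem integral_abs_sub_shift_le (hbdd : ∀ t, |w t| ≤ wstar) (hc : 0 ≤ c) (hchat : 0 ≤ chat)
    (hmono : StrictMono s) (htop : Tendsto s atTop atTop)
    (hlip : ∀ j, ∀ t₁ ∈ Ico (s j) (s (j + 1)), ∀ t₂ ∈ Ico (s j) (s (j + 1)),
      |w t₁ - w t₂| ≤ c * |t₁ - t₂|)
    (hL : ∀ j, Tendsto w (𝓝[<] s (j + 1)) (𝓝 (L j)))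
    (hjump : ∀ j, |w (s (j + 1)) - L j| ≤ chat * (s (j + 1) - s j))
    {T r h : ℝ} (hT : 0 ≤ T) (hr : s 0 ≤ r) (hh : 0 ≤ h) :
    ∫ t in 0..T - h, |w (r + t) - w (r + t + h)| ≤ h * (c * T + chat * T + 2 * wstar) := by
  have hwstar : 0 ≤ wstar := (abs_nonneg _).trans (hbdd 0)
  rcases lt_or_ge (T - h) 0 with hM | hM
  · rw [integral_symm, neg_le]
    refine le_trans ?_ (integral_nonneg hM.le fun _ _ => abs_nonneg _)
    rw [neg_nonpos]
    positivity
  set F := Finset.Ico (nextBreak s r) (nextBreak s (r + T))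
  have hpt : ∀ t ∈ Ioc 0 (T - h), |w (r + t) - w (r + t + h)| ≤
      c * h + ∑ i ∈ F, jumpAt w s L i * (Ico (s i - r - h) (s i - r - h + h)).indicator 1 t := by
    intro t ht
    have key := abs_sub_le_add_sum_jumpAt hmono htop hlip hL (by linarith [ht.1] : s 0 ≤ r + t)
      (le_add_of_nonneg_right hh)
    rw [add_sub_cancel_left] at key
    refine key.trans (add_le_add le_rfl ?_)
    calc ∑ i ∈ Finset.Ico (nextBreak s (r + t)) (nextBreak s (r + t + h)), jumpAt w s L i
        = ∑ i ∈ Finset.Ico (nextBreak s (r + t)) (nextBreak s (r + t + h)),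
            jumpAt w s L i * (Ico (s i - r - h) (s i - r - h + h)).indicator 1 t := by
          refine Finset.sum_congr rfl fun i hi => ?_
          obtain ⟨hlt, hle⟩ := (mem_Ico_nextBreak hmono htop).1 hi
          have hmem : t ∈ Ico (s i - r - h) (s i - r - h + h) := ⟨by linarith, by linarith⟩
          rw [indicator_of_mem hmem, Pi.one_apply, mul_one]
      _ ≤ _ := by
          refine Finset.sum_le_sum_of_subset_of_nonneg (Finset.Ico_subset_Ico ?_ ?_) fun i _ _ =>
            mul_nonneg (jumpAt_nonneg i) (indicator_nonneg (fun _ _ => zero_le_one) t)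
          · exact nextBreak_mono htop (by linarith [ht.1])
          · exact nextBreak_mono htop (by linarith [ht.2])
  calc ∫ t in 0..T - h, |w (r + t) - w (r + t + h)|
      ≤ c * h * (T - h) + (∑ i ∈ F, jumpAt w s L i) * h :=
        integral_le_of_le_add_sum_indicator F _ (fun i => s i - r - h) hM hh
          (fun _ => abs_nonneg _) jumpAt_nonneg hpt
    _ ≤ c * h * T + (2 * wstar + chat * T) * h := by
        gcongr
        · linarith
        · exact sum_jumpAt_le hbdd hchat htop hL hjump hT
    _ = h * (c * T + chat * T + 2 * wstar) := by ring
end jumpAt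

theorem stmt_18 (w : ℝ → ℝ) (wstar : ℝ) (hbdd : ∀ t : ℝ, |w t| ≤ wstar)
    (c chat : ℝ) (hc : 0 < c) (hchat : 0 < chat)
    (s : ℕ → ℝ) (hs0 : s 0 = 0) (hmono : StrictMono s)
    (htop : Filter.Tendsto s Filter.atTop Filter.atTop)
    (hlip : ∀ j : ℕ, ∀ t₁ ∈ Set.Ico (s j) (s (j+1)), ∀ t₂ ∈ Set.Ico (s j) (s (j+1)),
      |w t₁ - w t₂| ≤ c * |t₁ - t₂|)
    (hjump : ∀ j : ℕ, ∃ Lj : ℝ,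
      Filter.Tendsto w (nhdsWithin (s (j+1)) (Set.Iio (s (j+1)))) (nhds Lj) ∧
      |w (s (j+1)) - Lj| ≤ chat * (s (j+1) - s j)) :
    ∀ T : ℝ, 0 < T → ∀ ε : ℝ, 0 < ε → ∃ η : ℝ, 0 < η ∧
      ∀ r : ℝ, 0 ≤ r → ∀ h : ℝ, 0 < h → h ≤ η →
        (∫ t in (0:ℝ)..(T - h), |w (r + t) - w (r + t + h)|) ≤ ε := by
  choose L hL hLjump using hjump
  intro T hT ε hε
  have hwstar : 0 ≤ wstar := (abs_nonneg _).trans (hbdd 0)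
  have hD : 0 < c * T + chat * T + 2 * wstar := by positivity
  refine ⟨ε / (c * T + chat * T + 2 * wstar), div_pos hε hD, fun r hr h hh hhη => ?_⟩
  calc _ ≤ h * (c * T + chat * T + 2 * wstar) :=
        integral_abs_sub_shift_le hbdd hc.le hchat.le hmono htop hlip hL hLjump hT.le
          (hs0 ▸ hr) hh.le
    _ ≤ ε := (le_div_iff₀ hD).1 hhη
end
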